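/- Work in a monster model of a complete first-order theory T without the order property. Finitely satisfiable extensions over a model are unique: if M ⊆ B, and p, q are complete types over B (in possibly infinitely many variables) that are both finitely satisfiable in M and agree on M (p↾M = q↾M), then p = q. -/

import Mathlib

open FirstOrder Cardinal

universe u v

variable {L : FirstOrder.Language.{u, u}} {M : Type u} [L.Structure M]

/-- Two tuples have the same type over a parameter set `A` (in the ambient structure `M`,
thought of as a monster model): they satisfy the same formulas with parameters from `A`. -/
def SameTypeOver (L : FirstOrder.Language.{u, u}) {M : Type u} [L.Structure M] (A : Set M) {α : Type v} (a b : α → M) : Prop :=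
  ∀ (n : ℕ) (φ : L.Formula (α ⊕ Fin n)) (c : Fin n → M), (∀ i, c i ∈ A) →
    (φ.Realize (Sum.elim a c) ↔ φ.Realize (Sum.elim b c))

/-- `a ⫝_N B` : the type `tp(a / N ∪ B)` is finitely satisfiable in `N`: every formula with
parameters from `N ∪ B` satisfied by `a` is satisfied by a tuple from `N`. -/
def FinSatIndep (L : FirstOrder.Language.{u, u}) {M : Type u} [L.Structure M] (N : Set M) {α : Type v} (a : α → M) (B : Set M) : Prop :=
  ∀ (n : ℕ) (φ : L.Formula (α ⊕ Fin n)) (c : Fin n → M), (∀ i, c i ∈ N ∪ B) →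
    φ.Realize (Sum.elim a c) →
      ∃ a' : α → M, (∀ i, a' i ∈ N) ∧ φ.Realize (Sum.elim a' c)

/-- The structure `M` has the order property: some formula orders an infinite sequence
of finite tuples. -/
def HasOrderProp (L : FirstOrder.Language.{u, u}) (M : Type u) [L.Structure M] : Prop :=
  ∃ (k : ℕ) (φ : L.Formula (Fin k ⊕ Fin k)) (a : ℕ → Fin k → M),
    ∀ i j : ℕ, φ.Realize (Sum.elim (a i) (a j)) ↔ i < j

/-- An abstract complete type over `B ⊆ M` in variables `α`, represented as a set of
formula/parameter pairs: parameters come from `B`, every finite subset is realized in `M`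
(equivalently, the type is consistent with the elementary diagram of `M`), and the set is
complete (contains each formula over `B` or its negation). -/
def IsCompleteTypeOn (α : Type v) (B : Set M)
    (p : Set (Σ n : ℕ, L.Formula (α ⊕ Fin n) × (Fin n → M))) : Prop :=
  (∀ q ∈ p, ∀ i, q.2.2 i ∈ B) ∧
  (∀ s : Finset (Σ n : ℕ, L.Formula (α ⊕ Fin n) × (Fin n → M)), ↑s ⊆ p →
    ∃ a : α → M, ∀ q ∈ s, q.2.1.Realize (Sum.elim a q.2.2)) ∧
  (∀ (n : ℕ) (φ : L.Formula (α ⊕ Fin n)) (c : Fin n → M), (∀ i, c i ∈ B) →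
    (⟨n, (φ, c)⟩ ∈ p ∨ ⟨n, (φ.not, c)⟩ ∈ p))


/-!
Suppose `ψ(a, c)` and `¬ ψ(b, c)` with `c` from `B`. Say that `y` separates `(x₁, x₂)` if
`ψ(x₁, y) ∧ ¬ ψ(x₂, y)`. Inductively choose triples `(cᵢ, aᵢ, bᵢ)` in the model `S` such that
`c` separates every `(aᵢ, bᵢ)`, and `cᵢ` separates `(aⱼ, bⱼ)` exactly when `j ≤ i`:
by finite satisfiability, `aᵢ` and `bᵢ` copy the `ψ`-types of `a` and `b` over the earlier
`cⱼ ∈ S`, which coincide since `a ≡_S b`, so no earlier `cⱼ` separates `(aᵢ, bᵢ)`;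
and `c` witnesses that some `cᵢ ∈ S` separates all the pairs built so far, by elementarity.
The sequence `(cᵢ, aᵢ, bᵢ)` then has the order property. Formulas in infinitely many variables
only mention finitely many of them, which reduces the theorem to finite tuples.
-/

open FirstOrder.Language

namespace FirstOrder.Language.Formula

variable {ι α β γ : Type*}

/-- The conjunction of the formulas `φ i (x, yᵢ)`, each with its own copy `yᵢ` of the
parameter variables. -/
noncomputable def iInfCopies [Finite ι] (φ : ι → L.Formula (α ⊕ β)) : L.Formula (α ⊕ ι × β) :=
  iInf fun i => (φ i).relabel (Sum.map id (Prod.mk i))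

theorem realize_iInfCopies [Finite ι] (φ : ι → L.Formula (α ⊕ β)) (v : α → M)
    (w : ι × β → M) :
    (iInfCopies φ).Realize (Sum.elim v w) ↔ ∀ i, (φ i).Realize (Sum.elim v fun j => w (i, j)) := by
  simp only [iInfCopies, realize_iInf, realize_relabel, Sum.elim_comp_map, Function.comp_id]
  rfl

open Classical in
theorem realize_ite_not (φ : L.Formula α) (v w : α → M) :
    (if φ.Realize w then φ else φ.not).Realize v ↔ (φ.Realize v ↔ φ.Realize w) := by
  split_ifs with h <;> simp [h]

def separating (ψ : L.Formula (γ ⊕ β)) : L.Formula (β ⊕ (γ ⊕ γ)) :=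
  ψ.relabel (Sum.elim (Sum.inr ∘ Sum.inl) Sum.inl) ⊓
    (ψ.relabel (Sum.elim (Sum.inr ∘ Sum.inr) Sum.inl)).not

theorem realize_separating (ψ : L.Formula (γ ⊕ β)) (y : β → M) (x₁ x₂ : γ → M) :
    (separating ψ).Realize (Sum.elim y (Sum.elim x₁ x₂)) ↔
      ψ.Realize (Sum.elim x₁ y) ∧ ¬ ψ.Realize (Sum.elim x₂ y) := by
  simp only [separating, realize_inf, realize_not, realize_relabel, Sum.comp_elim,
    ← Function.comp_assoc, Sum.elim_comp_inl, Sum.elim_comp_inr]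

theorem exists_restrict_left (φ : L.Formula (α ⊕ β)) :
    ∃ (t : Finset α) (ψ : L.Formula (t ⊕ β)), ∀ (v : α → M) (w : β → M),
      ψ.Realize (Sum.elim (v ∘ (↑)) w) ↔ φ.Realize (Sum.elim v w) := by
  classical
  refine ⟨φ.freeVarFinset.toLeft, φ.restrictFreeVar fun x => Sum.casesOn x.1
    (fun a ha => Sum.inl ⟨a, by simp [ha]⟩) (fun b _ => Sum.inr b) x.2, fun v w => ?_⟩
  refine BoundedFormula.realize_restrictFreeVar _ ?_
  rintro ⟨a | b, h⟩ <;> rfl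

end FirstOrder.Language.Formula

namespace FinSatIndep

variable {N B : Set M} {α : Type*} {a : α → M}

theorem comp (ha : FinSatIndep L N a B) {δ : Type*} (e : δ → α) : FinSatIndep L N (a ∘ e) B := by
  intro n φ c hc h
  have hrel (v : α → M) : (φ.relabel (Sum.map e id)).Realize (Sum.elim v c) ↔
      φ.Realize (Sum.elim (v ∘ e) c) := by
    rw [Formula.realize_relabel, Sum.elim_comp_map, Function.comp_id]
  obtain ⟨a', ha'N, ha'⟩ := ha n _ c hc ((hrel a).2 h)
  exact ⟨a' ∘ e, fun i => ha'N (e i), (hrel a').1 ha'⟩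

theorem exists_realize (ha : FinSatIndep L N a B) {β : Type*} [Finite β]
    (φ : L.Formula (α ⊕ β)) (c : β → M) (hc : ∀ j, c j ∈ N ∪ B)
    (h : φ.Realize (Sum.elim a c)) :
    ∃ a' : α → M, (∀ i, a' i ∈ N) ∧ φ.Realize (Sum.elim a' c) := by
  let e := Finite.equivFin β
  have hrel (v : α → M) : (φ.relabel (Sum.map id e)).Realize (Sum.elim v (c ∘ e.symm)) ↔
      φ.Realize (Sum.elim v c) := by
    rw [Formula.realize_relabel, Sum.elim_comp_map, Function.comp_id, Function.comp_assoc,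
      e.symm_comp_self, Function.comp_id]
  obtain ⟨a', ha'N, ha'⟩ := ha _ _ (c ∘ e.symm) (fun j => hc _) ((hrel a).2 h)
  exact ⟨a', ha'N, (hrel a').1 ha'⟩

theorem exists_forall_realize (ha : FinSatIndep L N a B) {ι β : Type*} [Finite ι] [Finite β]
    (φ : ι → L.Formula (α ⊕ β)) (c : ι → β → M) (hc : ∀ i j, c i j ∈ N ∪ B)
    (h : ∀ i, (φ i).Realize (Sum.elim a (c i))) :
    ∃ a' : α → M, (∀ i, a' i ∈ N) ∧ ∀ i, (φ i).Realize (Sum.elim a' (c i)) := by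
  simp only [← Formula.realize_iInfCopies φ _ fun p => c p.1 p.2] at h ⊢
  exact ha.exists_realize _ _ (fun p => hc p.1 p.2) h

open Classical in
theorem exists_realize_and_agree (ha : FinSatIndep L N a B) {ι β : Type*} [Finite ι]
    [Finite β] {φ : L.Formula (α ⊕ β)} {c : β → M} (hc : ∀ j, c j ∈ N ∪ B)
    (h : φ.Realize (Sum.elim a c)) (ψ : L.Formula (α ⊕ β)) (d : ι → β → M)
    (hd : ∀ i j, d i j ∈ N ∪ B) :
    ∃ a' : α → M, (∀ i, a' i ∈ N) ∧ φ.Realize (Sum.elim a' c) ∧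
      ∀ i, (ψ.Realize (Sum.elim a' (d i)) ↔ ψ.Realize (Sum.elim a (d i))) := by
  let φs : Option ι → L.Formula (α ⊕ β) := fun o => o.elim φ fun i =>
    if ψ.Realize (Sum.elim a (d i)) then ψ else ψ.not
  have hφs (v : α → M) (i : ι) : (φs (some i)).Realize (Sum.elim v (d i)) ↔
      (ψ.Realize (Sum.elim v (d i)) ↔ ψ.Realize (Sum.elim a (d i))) :=
    Formula.realize_ite_not ψ _ _
  obtain ⟨a', ha'N, ha'⟩ := ha.exists_forall_realize φs (fun o => o.elim c d)
    (fun o j => o.rec (hc j) (hd · j)) (fun o => o.rec h fun i => (hφs a i).2 Iff.rfl)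
  exact ⟨a', ha'N, ha' none, fun i => (hφs a' i).1 (ha' (some i))⟩

end FinSatIndep

theorem SameTypeOver.comp {A : Set M} {α δ : Type*} {a b : α → M} (hab : SameTypeOver L A a b)
    (e : δ → α) : SameTypeOver L A (a ∘ e) (b ∘ e) := by
  intro n φ c hc
  have hrel (v : α → M) : (φ.relabel (Sum.map e id)).Realize (Sum.elim v c) ↔
      φ.Realize (Sum.elim (v ∘ e) c) := by
    rw [Formula.realize_relabel, Sum.elim_comp_map, Function.comp_id]
  rw [← hrel, ← hrel]
  exact hab n _ c hc

theorem SameTypeOver.symm {A : Set M} {α : Type*} {a b : α → M} (hab : SameTypeOver L A a b) :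
    SameTypeOver L A b a :=
  fun n φ c hc => (hab n φ c hc).symm

namespace FirstOrder.Language.ElementarySubstructure

variable (S : L.ElementarySubstructure M) {ι β γ : Type*}

theorem exists_realize_mem [Finite γ] (φ : L.Formula (γ ⊕ β)) (d : β → M) (hd : ∀ j, d j ∈ S)
    (h : ∃ y : γ → M, φ.Realize (Sum.elim y d)) :
    ∃ y : γ → M, (∀ i, y i ∈ S) ∧ φ.Realize (Sum.elim y d) := by
  let d' : β → S := fun j => ⟨d j, hd j⟩
  have hd' : S.subtype ∘ d' = d := rfl
  have hM : ((φ.relabel Sum.swap).iExs γ).Realize (S.subtype ∘ d') := by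
    rw [hd', Formula.realize_iExs]
    simpa [Formula.realize_relabel, Sum.elim_swap] using h
  obtain ⟨y, hy⟩ := Formula.realize_iExs.1 ((S.subtype.map_formula _ d').1 hM)
  refine ⟨S.subtype ∘ y, fun i => (y i).2, ?_⟩
  have := (S.subtype.map_formula _ _).2 hy
  rwa [Formula.realize_relabel, Sum.comp_elim, hd', Sum.elim_swap] at this

theorem exists_forall_realize_mem [Finite ι] [Finite γ] (φ : ι → L.Formula (γ ⊕ β))
    (d : ι → β → M) (hd : ∀ i j, d i j ∈ S)
    (h : ∃ y : γ → M, ∀ i, (φ i).Realize (Sum.elim y (d i))) :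
    ∃ y : γ → M, (∀ k, y k ∈ S) ∧ ∀ i, (φ i).Realize (Sum.elim y (d i)) := by
  simp only [← Formula.realize_iInfCopies φ _ fun p => d p.1 p.2] at h ⊢
  exact S.exists_realize_mem _ _ (fun p => hd p.1 p.2) h

end FirstOrder.Language.ElementarySubstructure

theorem hasOrderProp_of_finite {γ : Type*} [Finite γ] (φ : L.Formula (γ ⊕ γ)) (u : ℕ → γ → M)
    (h : ∀ i j, φ.Realize (Sum.elim (u i) (u j)) ↔ i < j) : HasOrderProp L M := by
  let e := Finite.equivFin γ
  refine ⟨_, φ.relabel (Sum.map e e), fun i => u i ∘ e.symm, fun i j => ?_⟩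
  rw [Formula.realize_relabel, Sum.elim_comp_map, Function.comp_assoc, Function.comp_assoc,
    e.symm_comp_self, Function.comp_id, Function.comp_id, h]

section OrderProperty

open Formula

variable (S : L.ElementarySubstructure M) {B : Set M} {γ : Type*} {n : ℕ}
  {a b : γ → M} {c : Fin n → M} {ψ : L.Formula (γ ⊕ Fin n)}

/-- A tuple `u` of `S` encodes a triple `(c', a', b')` as `Sum.elim c' (Sum.elim a' b')`.
Given finitely many such triples whose pairs `(a', b')` are separated by `c`, there is a new one
whose parameter separates all the old pairs and whose pair is separated by none of the old
parameters. -/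
theorem exists_separating_extension (hc : ∀ j, c j ∈ B)
    (ha : FinSatIndep L (S : Set M) a B) (hb : FinSatIndep L (S : Set M) b B)
    (hab : SameTypeOver L (S : Set M) a b)
    (hpos : ψ.Realize (Sum.elim a c)) (hneg : ¬ ψ.Realize (Sum.elim b c))
    (s : Finset (Fin n ⊕ (γ ⊕ γ) → M))
    (hs : ∀ v ∈ s, (∀ x, v x ∈ S) ∧ (separating ψ).Realize (Sum.elim c (v ∘ Sum.inr))) :
    ∃ u : Fin n ⊕ (γ ⊕ γ) → M,
      ((∀ x, u x ∈ S) ∧ (separating ψ).Realize (Sum.elim c (u ∘ Sum.inr)) ∧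
        (separating ψ).Realize (Sum.elim (u ∘ Sum.inl) (u ∘ Sum.inr))) ∧
      ∀ v ∈ s, (separating ψ).Realize (Sum.elim (u ∘ Sum.inl) (v ∘ Sum.inr)) ∧
        ¬ (separating ψ).Realize (Sum.elim (v ∘ Sum.inl) (u ∘ Sum.inr)) := by
  have hsS (v : s) (j : Fin n) : v.1 (Sum.inl j) ∈ (S : Set M) ∪ B := Or.inl ((hs v v.2).1 _)
  obtain ⟨a', ha'S, ha'c, ha'⟩ :=
    ha.exists_realize_and_agree (fun j => Or.inr (hc j)) hpos ψ (fun v : s => v.1 ∘ Sum.inl) hsS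
  obtain ⟨b', hb'S, hb'c, hb'⟩ := hb.exists_realize_and_agree (φ := ψ.not)
    (fun j => Or.inr (hc j)) (realize_not.2 hneg) ψ (fun v : s => v.1 ∘ Sum.inl) hsS
  let pairs : Option s → γ ⊕ γ → M := fun o => o.elim (Sum.elim a' b') fun v => v.1 ∘ Sum.inr
  have hpairsS : ∀ o j, pairs o j ∈ S := by
    rintro (_ | v) (i | i)
    exacts [ha'S i, hb'S i, (hs v v.2).1 _, (hs v v.2).1 _]
  have hpairs_sep : ∀ o, (separating ψ).Realize (Sum.elim c (pairs o)) := by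
    rintro (_ | v)
    exacts [(realize_separating ψ _ _ _).2 ⟨ha'c, realize_not.1 hb'c⟩, (hs v v.2).2]
  obtain ⟨c', hc'S, hc'⟩ :=
    S.exists_forall_realize_mem (fun _ => separating ψ) pairs hpairsS ⟨c, hpairs_sep⟩
  refine ⟨Sum.elim c' (Sum.elim a' b'), ⟨?_, hpairs_sep none, hc' none⟩,
    fun v hv => ⟨hc' (some ⟨v, hv⟩), ?_⟩⟩
  · rintro (j | i | i)
    exacts [hc'S j, ha'S i, hb'S i]
  · -- the old parameters see `a'` as `a` and `b'` as `b`, and `a`, `b` have the same type over `S`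
    have hvS : ∀ j, (v ∘ Sum.inl) j ∈ (S : Set M) := fun j => (hs v hv).1 _
    simp only [Sum.elim_comp_inr, realize_separating, not_and, not_not]
    intro h
    exact (hb' ⟨v, hv⟩).2 ((hab n ψ _ hvS).1 ((ha' ⟨v, hv⟩).1 h))

theorem hasOrderProp_of_finSatIndep [Finite γ] (hc : ∀ j, c j ∈ B)
    (ha : FinSatIndep L (S : Set M) a B) (hb : FinSatIndep L (S : Set M) b B)
    (hab : SameTypeOver L (S : Set M) a b)
    (hpos : ψ.Realize (Sum.elim a c)) (hneg : ¬ ψ.Realize (Sum.elim b c)) :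
    HasOrderProp L M := by
  obtain ⟨u, hu, hlt⟩ := exists_seq_of_forall_finset_exists
    (fun u => (∀ x, u x ∈ S) ∧ (separating ψ).Realize (Sum.elim c (u ∘ Sum.inr)) ∧
      (separating ψ).Realize (Sum.elim (u ∘ Sum.inl) (u ∘ Sum.inr)))
    (fun v u => (separating ψ).Realize (Sum.elim (u ∘ Sum.inl) (v ∘ Sum.inr)) ∧
        ¬ (separating ψ).Realize (Sum.elim (v ∘ Sum.inl) (u ∘ Sum.inr)))
    fun s hs => exists_separating_extension S hc ha hb hab hpos hneg s
      fun v hv => ⟨(hs v hv).1, (hs v hv).2.1⟩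
  refine hasOrderProp_of_finite ((separating ψ).relabel (Sum.map Sum.inl Sum.inr)).not u
    fun i j => ?_
  rw [realize_not, realize_relabel, Sum.elim_comp_map]
  rcases lt_trichotomy i j with h | rfl | h
  · simpa [h] using (hlt i j h).2
  · simpa using (hu i).2.2
  · simpa [h.not_gt] using (hlt j i h).1

end OrderProperty

theorem realize_of_finSatIndep (hNOP : ¬ HasOrderProp L M) (S : L.ElementarySubstructure M)
    {B : Set M} {α : Type*} {a b : α → M}
    (ha : FinSatIndep L (S : Set M) a B) (hb : FinSatIndep L (S : Set M) b B)
    (hab : SameTypeOver L (S : Set M) a b) {n : ℕ} {c : Fin n → M} (hc : ∀ j, c j ∈ B)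
    (φ : L.Formula (α ⊕ Fin n)) (h : φ.Realize (Sum.elim a c)) :
    φ.Realize (Sum.elim b c) := by
  by_contra hneg
  obtain ⟨t, ψ, hψ⟩ := φ.exists_restrict_left (M := M)
  exact hNOP <| hasOrderProp_of_finSatIndep S hc (ha.comp Subtype.val)
    (hb.comp Subtype.val) (hab.comp Subtype.val)
    ((hψ a c).2 h) (mt (hψ b c).1 hneg)

theorem stmt15_general (L : FirstOrder.Language.{u, u}) (M : Type u) [L.Structure M]
    (hNOP : ¬ HasOrderProp L M)
    (S : L.ElementarySubstructure M) (B : Set M)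
    {α : Type v} (a b : α → M)
    (ha : FinSatIndep L (S : Set M) a B) (hb : FinSatIndep L (S : Set M) b B)
    (hab : SameTypeOver L (S : Set M) a b) :
    SameTypeOver L B a b :=
  fun _ φ _ hc => ⟨realize_of_finSatIndep hNOP S ha hb hab hc φ,
    realize_of_finSatIndep hNOP S hb ha hab.symm hc φ⟩

/-- Uniqueness of finitely satisfiable extensions over a model, in a theory without the
order property: if `M ⊆ B` and the types of `a` and of `b` over `B` (in possibly infinitely
many variables) are both finitely satisfiable in the model `M` and agree on `M`, then they
are equal. -/
theorem stmt15 (L : FirstOrder.Language.{u, u}) (M : Type u) [L.Structure M] [Infinite M]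
    (hNOP : ¬ HasOrderProp L M)
    (S : L.ElementarySubstructure M) (B : Set M) (hSB : (S : Set M) ⊆ B)
    {α : Type v} (a b : α → M)
    (ha : FinSatIndep L (S : Set M) a B) (hb : FinSatIndep L (S : Set M) b B)
    (hab : SameTypeOver L (S : Set M) a b) :
    SameTypeOver L B a b :=
  stmt15_general L M hNOP S B a b ha hb hab
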